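/- Let M be a differentiable N-function satisfying the Δ₂-condition and such that r ↦ M(r)/r² is non-decreasing, and let n ≥ 1. Then there exist positive constants C₁ and C₂ such that for every u ∈ C₀^∞(ℝⁿ), ∫_{ℝⁿ} M(|∇u|) dγ_n ≤ C₁ ∫_{ℝⁿ} M(|∇⁽²⁾u|) dγ_n + C₂ ∫_{ℝⁿ} M(|u|) dγ_n. -/

import Mathlib

open MeasureTheory Real Set Filter
open scoped RealInnerProductSpace ENNReal

/-- The Gaussian-type measure `dγ_n(x) = e^{−|x|²/2} dx` on `ℝⁿ`. -/
noncomputable def gammaN (n : ℕ) : Measure (EuclideanSpace ℝ (Fin n)) :=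
  volume.withDensity (fun x => ENNReal.ofReal (Real.exp (-‖x‖ ^ 2 / 2)))

/-- `M` is an `N`-function: convex on `[0,∞)`, `M(0)=0`, `M(r)/r → 0` as `r → 0⁺`
and `M(r)/r → ∞` as `r → ∞`. -/
def NFunction (M : ℝ → ℝ) : Prop :=
  ConvexOn ℝ (Set.Ici 0) M ∧ M 0 = 0 ∧
  Filter.Tendsto (fun r => M r / r) (nhdsWithin 0 (Set.Ioi 0)) (nhds 0) ∧
  Filter.Tendsto (fun r => M r / r) Filter.atTop Filter.atTop

/-- The `Δ₂`-condition: `M(2r) ≤ C_M M(r)` for some `C_M > 1` and all `r > 0`. -/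
def Delta2 (M : ℝ → ℝ) : Prop :=
  ∃ C : ℝ, 1 < C ∧ ∀ r : ℝ, 0 < r → M (2 * r) ≤ C * M r

/-- The Hilbert–Schmidt norm of the Hessian of `u` at `x`:
`|∇⁽²⁾u(x)| = (∑_{i,j} (∂²u/∂xᵢ∂xⱼ)²)^{1/2}`. -/
noncomputable def hessHS {n : ℕ} (u : EuclideanSpace ℝ (Fin n) → ℝ)
    (x : EuclideanSpace ℝ (Fin n)) : ℝ :=
  Real.sqrt (∑ i : Fin n, ∑ j : Fin n,
    (iteratedFDeriv ℝ 2 u x ![EuclideanSpace.single i 1, EuclideanSpace.single j 1]) ^ 2)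


set_option linter.unusedSectionVars false


section Mlemmas
variable {M : ℝ → ℝ} {C : ℝ}

lemma M_slope_mono (hconv : ConvexOn ℝ (Set.Ici 0) M) (h0 : M 0 = 0) :
    ∀ s r, 0 < s → s ≤ r → M s / s ≤ M r / r := by
  intro s r hs hsr
  have h : (0:ℝ) < r := lt_of_lt_of_le hs hsr
  have hcomb := hconv.2 (mem_Ici.2 h.le) (mem_Ici.2 le_rfl)
    (show (0:ℝ) ≤ s / r by positivity)
    (show (0:ℝ) ≤ 1 - s / r by have : s / r ≤ 1 := (div_le_one h).2 hsr; linarith)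
    (show s / r + (1 - s / r) = 1 by ring)
  simp only [smul_eq_mul, mul_zero, add_zero, h0] at hcomb
  rw [div_mul_cancel₀ _ h.ne'] at hcomb
  rw [div_le_div_iff₀ hs h]
  have h2 := mul_le_mul_of_nonneg_right hcomb h.le
  rw [mul_comm (s/r) (M r), mul_assoc, div_mul_cancel₀ _ h.ne'] at h2
  linarith

lemma M_nonneg (hconv : ConvexOn ℝ (Set.Ici 0) M) (h0 : M 0 = 0)
    (hlim : Filter.Tendsto (fun r => M r / r) (nhdsWithin 0 (Set.Ioi 0)) (nhds 0)) :
    ∀ r, 0 ≤ r → 0 ≤ M r := by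
  intro r hr
  rcases eq_or_lt_of_le hr with h | h
  · simp [← h, h0]
  have h2 : 0 ≤ M r / r := by
    refine le_of_tendsto hlim ?_
    filter_upwards [self_mem_nhdsWithin, eventually_nhdsWithin_of_eventually_nhds
      (eventually_le_nhds h)] with s hs hsr
    exact M_slope_mono hconv h0 s r hs hsr
  have := mul_nonneg h2 h.le
  rwa [div_mul_cancel₀ _ h.ne'] at this

lemma M_mono (hconv : ConvexOn ℝ (Set.Ici 0) M) (h0 : M 0 = 0)
    (hlim : Filter.Tendsto (fun r => M r / r) (nhdsWithin 0 (Set.Ioi 0)) (nhds 0)) :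
    ∀ a b, 0 ≤ a → a ≤ b → M a ≤ M b := by
  intro a b ha hab
  rcases eq_or_lt_of_le ha with h | h
  · rw [← h, h0]; exact M_nonneg hconv h0 hlim b (h ▸ hab)
  have hb : (0:ℝ) < b := lt_of_lt_of_le h hab
  have := M_slope_mono hconv h0 a b h hab
  rw [div_le_div_iff₀ h hb] at this
  have hMb := M_nonneg hconv h0 hlim b hb.le
  nlinarith

end Mlemmas

section Delta
variable {M : ℝ → ℝ} {C : ℝ}
variable (hC : 1 < C) (hd : ∀ r : ℝ, 0 < r → M (2 * r) ≤ C * M r)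
variable (hnn : ∀ r, 0 ≤ r → 0 ≤ M r) (h0 : M 0 = 0)

include hC hd hnn h0 in
lemma M_double : ∀ r, 0 ≤ r → M (2 * r) ≤ C * M r := by
  intro r hr
  rcases eq_or_lt_of_le hr with h | h
  · simp [← h, h0]
  · exact hd r h

include hC hd hnn h0 in
lemma M_add (hmono : ∀ a b, 0 ≤ a → a ≤ b → M a ≤ M b) :
    ∀ a b, 0 ≤ a → 0 ≤ b → M (a + b) ≤ C * (M a + M b) := by
  intro a b ha hb
  rcases le_total a b with h | h
  · calc M (a + b) ≤ M (2 * b) := hmono _ _ (by linarith) (by linarith)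
    _ ≤ C * M b := M_double hC hd hnn h0 b hb
    _ ≤ C * (M a + M b) := by nlinarith [hnn a ha]
  · calc M (a + b) ≤ M (2 * a) := hmono _ _ (by linarith) (by linarith)
    _ ≤ C * M a := M_double hC hd hnn h0 a ha
    _ ≤ C * (M a + M b) := by nlinarith [hnn b hb]

include hC hd hnn h0 in
lemma M_sum (hmono : ∀ a b, 0 ≤ a → a ≤ b → M a ≤ M b)
    {ι : Type*} (s : Finset ι) (a : ι → ℝ) (hpos : ∀ i, 0 ≤ a i) :
    M (∑ i ∈ s, a i) ≤ C ^ s.card * ∑ i ∈ s, M (a i) := by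
  classical
  induction s using Finset.induction_on with
  | empty => simp [h0]
  | @insert j s hj ih =>
    rw [Finset.sum_insert hj, Finset.sum_insert hj, Finset.card_insert_of_notMem hj]
    have hsum : (0:ℝ) ≤ ∑ i ∈ s, a i := Finset.sum_nonneg fun i _ => hpos i
    have hMsum : (0:ℝ) ≤ ∑ i ∈ s, M (a i) :=
      Finset.sum_nonneg fun i _ => hnn _ (hpos i)
    have hCpow : (1:ℝ) ≤ C ^ s.card := one_le_pow₀ hC.le
    calc M (a j + ∑ i ∈ s, a i) ≤ C * (M (a j) + M (∑ i ∈ s, a i)) :=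
          M_add hC hd hnn h0 hmono _ _ (hpos j) hsum
    _ ≤ C * (M (a j) + C ^ s.card * ∑ i ∈ s, M (a i)) := by nlinarith [ih, hC.le]
    _ ≤ C ^ (s.card + 1) * (M (a j) + ∑ i ∈ s, M (a i)) := by
        rw [pow_succ, mul_comm (C ^ s.card) C, mul_assoc]
        have h1 := hnn (a j) (hpos j)
        have h2 : M (a j) ≤ C ^ s.card * M (a j) := le_mul_of_one_le_left h1 hCpow
        have h3 : (0:ℝ) < C := lt_trans one_pos hC
        nlinarith

end Delta


variable {E : Type*} [NormedAddCommGroup E] [NormedSpace ℝ E]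

lemma line_hasDerivAt (x v : E) (s : ℝ) :
    HasDerivAt (fun t : ℝ => x + t • v) v s := by
  simpa using ((hasDerivAt_id s).smul_const v).const_add x

lemma deriv_line_bound (u : E → ℝ) (hu : ContDiff ℝ (⊤ : ℕ∞) u) (x v : E) :
    |fderiv ℝ u x v| ≤ |u (x + v)| + |u x| +
      ∫ s in (0:ℝ)..1, |iteratedFDeriv ℝ 2 u (x + s • v) ![v, v]| := by
  set F : E → ℝ := fun y => fderiv ℝ u y v with hF
  set H : E → ℝ := fun y => iteratedFDeriv ℝ 2 u y ![v, v] with hH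
  have hu1 : ContDiff ℝ (⊤ : ℕ∞) (fderiv ℝ u) := (hu.fderiv_right (by simp))
  have hFc : Continuous F := (hu1.continuous.clm_apply continuous_const)
  have hHc : Continuous H :=
    (ContinuousMultilinearMap.apply ℝ (fun _ : Fin 2 => E) ℝ ![v, v]).continuous.comp
      (hu.continuous_iteratedFDeriv (WithTop.coe_le_coe.mpr le_top))
  -- g' s = F (x + s • v) has derivative etc.
  have hg : ∀ s : ℝ, HasDerivAt (fun t => u (x + t • v)) (F (x + s • v)) s := fun s =>
    (hu.differentiable (by simp) _).hasFDerivAt.comp_hasDerivAt s (line_hasDerivAt x v s)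
  have hFd : ∀ y, HasFDerivAt F (((fderiv ℝ (fderiv ℝ u) y).flip) v) y := by
    intro y
    exact ((hu1.differentiable (by simp) y).hasFDerivAt).clm_apply (hasFDerivAt_const v y) |>.congr_fderiv (by
      ext w
      simp)
  have hg2 : ∀ s : ℝ, HasDerivAt (fun t => F (x + t • v)) (H (x + s • v)) s := by
    intro s
    have := (hFd (x + s • v)).comp_hasDerivAt s (line_hasDerivAt x v s)
    convert this using 1
    show iteratedFDeriv ℝ 2 u (x + s • v) ![v, v] = _
    rw [iteratedFDeriv_two_apply]
    simp [ContinuousLinearMap.flip_apply]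
    all_goals rfl
  set φ : ℝ → ℝ := fun s => F (x + s • v) with hφ
  set ψ : ℝ → ℝ := fun s => H (x + s • v) with hψ
  have hφc : Continuous φ := hFc.comp (by continuity)
  have hψc : Continuous ψ := hHc.comp (by continuity)
  have ftc1 : ∫ s in (0:ℝ)..1, φ s = u (x + v) - u x := by
    have := intervalIntegral.integral_eq_sub_of_hasDerivAt (f := fun t => u (x + t • v))
      (f' := φ) (a := 0) (b := 1) (fun t _ => hg t) (hφc.intervalIntegrable 0 1)
    simpa using this
  have ftc2 : ∀ s : ℝ, ∫ r in (0:ℝ)..s, ψ r = φ s - φ 0 := by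
    intro s
    exact intervalIntegral.integral_eq_sub_of_hasDerivAt (fun t _ => hg2 t)
      (hψc.intervalIntegrable 0 s)
  have hφ0 : φ 0 = fderiv ℝ u x v := by simp [hφ, hF]
  have key : φ 0 = (∫ s in (0:ℝ)..1, φ s) - ∫ s in (0:ℝ)..1, (φ s - φ 0) := by
    rw [intervalIntegral.integral_sub (hφc.intervalIntegrable 0 1)
      (intervalIntegrable_const)]
    simp
  have hb1 : ∀ s ∈ Set.Icc (0:ℝ) 1, |φ s - φ 0| ≤ ∫ r in (0:ℝ)..1, |ψ r| := by
    intro s hs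
    rw [← ftc2 s]
    calc |∫ r in (0:ℝ)..s, ψ r| ≤ ∫ r in (0:ℝ)..s, |ψ r| := by
          simpa using intervalIntegral.abs_integral_le_integral_abs hs.1
    _ ≤ ∫ r in (0:ℝ)..1, |ψ r| := by
        apply intervalIntegral.integral_mono_interval (le_refl (0:ℝ)) hs.1 hs.2
        · filter_upwards with r using abs_nonneg _
        · exact (hψc.abs.intervalIntegrable 0 1)
  have hb2 : (∫ s in (0:ℝ)..1, |φ s - φ 0|) ≤ ∫ r in (0:ℝ)..1, |ψ r| := by
    calc (∫ s in (0:ℝ)..1, |φ s - φ 0|) ≤ ∫ s in (0:ℝ)..1, (∫ r in (0:ℝ)..1, |ψ r|) := by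
          apply intervalIntegral.integral_mono_on zero_le_one
            ((hφc.sub continuous_const).abs.intervalIntegrable 0 1)
            (intervalIntegrable_const) hb1
    _ = ∫ r in (0:ℝ)..1, |ψ r| := by simp
  have habs : |∫ s in (0:ℝ)..1, (φ s - φ 0)| ≤ ∫ s in (0:ℝ)..1, |φ s - φ 0| := by
    simpa using intervalIntegral.abs_integral_le_integral_abs (zero_le_one (α := ℝ))
  rw [← hφ0]
  calc |φ 0| ≤ |∫ s in (0:ℝ)..1, φ s| + |∫ s in (0:ℝ)..1, (φ s - φ 0)| := by
        conv_lhs => rw [key]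
        exact abs_sub (∫ s in (0:ℝ)..1, φ s) (∫ s in (0:ℝ)..1, (φ s - φ 0))
  _ ≤ (|u (x + v)| + |u x|) + ∫ r in (0:ℝ)..1, |ψ r| := by
      rw [ftc1]
      have h1 : |u (x + v) - u x| ≤ |u (x + v)| + |u x| := abs_sub _ _
      have h2 := le_trans habs hb2
      linarith
  _ = |u (x + v)| + |u x| + ∫ s in (0:ℝ)..1, |iteratedFDeriv ℝ 2 u (x + s • v) ![v, v]| := by
      rfl



variable {n : ℕ}

lemma grad_le_sum_partials (u : EuclideanSpace ℝ (Fin n) → ℝ)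
    (x : EuclideanSpace ℝ (Fin n)) :
    ‖gradient u x‖ ≤ ∑ i : Fin n, |fderiv ℝ u x (EuclideanSpace.single i 1)| := by
  have hcoord : ∀ i, fderiv ℝ u x (EuclideanSpace.single i 1) = gradient u x i := by
    intro i
    rw [show gradient u x = (InnerProductSpace.toDual ℝ _).symm (fderiv ℝ u x) from rfl]
    rw [← InnerProductSpace.toDual_symm_apply]
    rw [real_inner_comm]
    rw [EuclideanSpace.inner_single_left]
    simp
  calc ‖gradient u x‖ = Real.sqrt (∑ i, |gradient u x i| ^ 2) := by
        rw [EuclideanSpace.norm_eq]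
        congr 1
  _ ≤ ∑ i, |gradient u x i| := by
      rw [show ∑ i, |gradient u x i| = Real.sqrt ((∑ i, |gradient u x i|) ^ 2) from
        (Real.sqrt_sq (Finset.sum_nonneg fun i _ => abs_nonneg _)).symm]
      exact Real.sqrt_le_sqrt (Finset.sum_sq_le_sq_sum_of_nonneg fun i _ => abs_nonneg _)
  _ = ∑ i, |fderiv ℝ u x (EuclideanSpace.single i 1)| :=
      Finset.sum_congr rfl fun i _ => by rw [hcoord i]

lemma diag_le_hessHS (u : EuclideanSpace ℝ (Fin n) → ℝ) (x : EuclideanSpace ℝ (Fin n))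
    (i : Fin n) :
    |iteratedFDeriv ℝ 2 u x ![EuclideanSpace.single i 1, EuclideanSpace.single i 1]| ≤
      hessHS u x := by
  rw [hessHS, ← Real.sqrt_sq_eq_abs]
  apply Real.sqrt_le_sqrt
  calc (iteratedFDeriv ℝ 2 u x ![EuclideanSpace.single i 1, EuclideanSpace.single i 1]) ^ 2
      ≤ ∑ j, (iteratedFDeriv ℝ 2 u x ![EuclideanSpace.single i 1, EuclideanSpace.single j 1]) ^ 2 :=
        Finset.single_le_sum (f := fun j =>
          (iteratedFDeriv ℝ 2 u x ![EuclideanSpace.single i 1, EuclideanSpace.single j 1]) ^ 2)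
          (fun j _ => sq_nonneg _) (Finset.mem_univ i)
  _ ≤ ∑ k, ∑ j, (iteratedFDeriv ℝ 2 u x ![EuclideanSpace.single k 1, EuclideanSpace.single j 1]) ^ 2 :=
        Finset.single_le_sum (f := fun k =>
          ∑ j, (iteratedFDeriv ℝ 2 u x ![EuclideanSpace.single k 1, EuclideanSpace.single j 1]) ^ 2)
          (fun k _ => Finset.sum_nonneg fun j _ => sq_nonneg _) (Finset.mem_univ i)

lemma hessHS_nonneg (u : EuclideanSpace ℝ (Fin n) → ℝ) (x : EuclideanSpace ℝ (Fin n)) :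
    0 ≤ hessHS u x := Real.sqrt_nonneg _

lemma hessHS_continuous (u : EuclideanSpace ℝ (Fin n) → ℝ) (hu : ContDiff ℝ (⊤ : ℕ∞) u) :
    Continuous (hessHS u) := by
  apply Real.continuous_sqrt.comp
  apply continuous_finset_sum
  intro i _
  apply continuous_finset_sum
  intro j _
  exact (((ContinuousMultilinearMap.apply ℝ (fun _ : Fin 2 => EuclideanSpace ℝ (Fin n)) ℝ
    ![EuclideanSpace.single i 1, EuclideanSpace.single j 1]).continuous.comp
    (hu.continuous_iteratedFDeriv (WithTop.coe_le_coe.mpr le_top))).pow 2)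



variable {n : ℕ}

lemma rho_measurable :
    Measurable (fun x : EuclideanSpace ℝ (Fin n) => ENNReal.ofReal (Real.exp (-‖x‖ ^ 2 / 2))) := by
  apply ENNReal.measurable_ofReal.comp
  exact (Real.continuous_exp.comp (by continuity)).measurable

lemma shift_bound (f : EuclideanSpace ℝ (Fin n) → ℝ≥0∞) (hf : Measurable f)
    (c : EuclideanSpace ℝ (Fin n)) (hc : ‖c‖ ≤ 1)
    (S : Set (EuclideanSpace ℝ (Fin n))) (hS : MeasurableSet S)
    (hSc : ∀ x ∈ S, ⟪x, c⟫ ≤ 0) :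
    ∫⁻ x in S, f (x + c) ∂(gammaN n) ≤
      ENNReal.ofReal (Real.exp (1/2)) * ∫⁻ x, f x ∂(gammaN n) := by
  set ρ : EuclideanSpace ℝ (Fin n) → ℝ≥0∞ :=
    fun x => ENNReal.ofReal (Real.exp (-‖x‖ ^ 2 / 2)) with hρ
  have hρm : Measurable ρ := rho_measurable
  have key : ∀ x ∈ S, ρ x ≤ ENNReal.ofReal (Real.exp (1/2)) * ρ (x + c) := by
    intro x hx
    rw [hρ, ← ENNReal.ofReal_mul (Real.exp_pos _).le, ← Real.exp_add]
    apply ENNReal.ofReal_le_ofReal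
    apply Real.exp_le_exp.2
    have hnorm : ‖x + c‖ ^ 2 = ‖x‖ ^ 2 + 2 * ⟪x, c⟫ + ‖c‖ ^ 2 := by
      rw [@norm_add_sq_real]
    have h1 : ‖c‖ ^ 2 ≤ 1 := by nlinarith [norm_nonneg c]
    have h2 := hSc x hx
    nlinarith
  have step1 : ∫⁻ x in S, f (x + c) ∂(gammaN n) = ∫⁻ x in S, ρ x * f (x + c) := by
    rw [gammaN, restrict_withDensity hS, lintegral_withDensity_eq_lintegral_mul _ hρm]
    · rfl
    · exact hf.comp (measurable_id.add_const c)
  have step2 : ∫⁻ x in S, ρ x * f (x + c) ≤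
      ∫⁻ x, (ENNReal.ofReal (Real.exp (1/2)) * ρ (x + c)) * f (x + c) := by
    refine le_trans (setLIntegral_mono ((hρm.comp (measurable_id.add_const c)).const_mul _
      |>.mul (hf.comp (measurable_id.add_const c))) fun x hx => ?_)
      (setLIntegral_le_lintegral S _)
    exact mul_le_mul_left (key x hx) _
  have step3 : ∫⁻ x, (ENNReal.ofReal (Real.exp (1/2)) * ρ (x + c)) * f (x + c) =
      ENNReal.ofReal (Real.exp (1/2)) * ∫⁻ x, ρ (x + c) * f (x + c) := by
    simp_rw [mul_assoc]
    exact lintegral_const_mul _ ((hρm.comp (measurable_id.add_const c)).mul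
      (hf.comp (measurable_id.add_const c)))
  have step4 : ∫⁻ x, ρ (x + c) * f (x + c) = ∫⁻ x, f x ∂(gammaN n) := by
    rw [gammaN, lintegral_withDensity_eq_lintegral_mul _ hρm hf]
    exact lintegral_add_right_eq_self (fun y => ρ y * f y) c
  calc ∫⁻ x in S, f (x + c) ∂(gammaN n) = ∫⁻ x in S, ρ x * f (x + c) := step1
  _ ≤ ∫⁻ x, (ENNReal.ofReal (Real.exp (1/2)) * ρ (x + c)) * f (x + c) := step2
  _ = ENNReal.ofReal (Real.exp (1/2)) * ∫⁻ x, ρ (x + c) * f (x + c) := step3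
  _ = ENNReal.ofReal (Real.exp (1/2)) * ∫⁻ x, f x ∂(gammaN n) := by rw [step4]



section Pointwise
variable {n : ℕ} {M : ℝ → ℝ} {C : ℝ}

lemma jensenM (hconv : ConvexOn ℝ (Set.Ici 0) M) (hMc : ContinuousOn M (Set.Ici 0))
    (g : ℝ → ℝ) (hg : Continuous g) (hgnn : ∀ s, 0 ≤ g s) :
    M (∫ s in (0:ℝ)..1, g s) ≤ ∫ s in (0:ℝ)..1, M (g s) := by
  rw [intervalIntegral.integral_of_le zero_le_one, intervalIntegral.integral_of_le zero_le_one]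
  haveI : IsProbabilityMeasure (volume.restrict (Set.Ioc (0:ℝ) 1)) :=
    ⟨by simp [Measure.restrict_apply]⟩
  exact hconv.map_integral_le hMc isClosed_Ici (Filter.Eventually.of_forall fun s => hgnn s)
    (hg.integrableOn_Ioc) ((hMc.comp_continuous hg hgnn).integrableOn_Ioc)

lemma abs_iteratedFDeriv_smul_le (u : EuclideanSpace ℝ (Fin n) → ℝ) (i : Fin n) (ε : ℝ)
    (hε : ε = 1 ∨ ε = -1) (y : EuclideanSpace ℝ (Fin n)) :
    |iteratedFDeriv ℝ 2 u y ![ε • EuclideanSpace.single i 1, ε • EuclideanSpace.single i 1]| ≤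
      hessHS u y := by
  have habs : |ε| = 1 := by rcases hε with h | h <;> simp [h]
  have h1 : iteratedFDeriv ℝ 2 u y ![ε • EuclideanSpace.single i 1, ε • EuclideanSpace.single i 1]
      = ε * (ε * iteratedFDeriv ℝ 2 u y ![EuclideanSpace.single i 1, EuclideanSpace.single i 1]) := by
    rw [iteratedFDeriv_two_apply, iteratedFDeriv_two_apply]
    simp only [Matrix.cons_val_zero, Matrix.cons_val_one, Matrix.head_cons]
    simp only [_root_.map_smul, ContinuousLinearMap.smul_apply, smul_eq_mul]
  rw [h1, abs_mul, abs_mul, habs, one_mul, one_mul]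
  exact diag_le_hessHS u y i

lemma pointwise_bound (hconv : ConvexOn ℝ (Set.Ici 0) M) (h0 : M 0 = 0)
    (hMc : ContinuousOn M (Set.Ici 0))
    (hC : 1 < C) (hd : ∀ r : ℝ, 0 < r → M (2 * r) ≤ C * M r)
    (hnn : ∀ r, 0 ≤ r → 0 ≤ M r)
    (hmono : ∀ a b, 0 ≤ a → a ≤ b → M a ≤ M b)
    (u : EuclideanSpace ℝ (Fin n) → ℝ) (hu : ContDiff ℝ (⊤ : ℕ∞) u)
    (i : Fin n) (ε : ℝ) (hε : ε = 1 ∨ ε = -1) (x : EuclideanSpace ℝ (Fin n)) :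
    M |fderiv ℝ u x (EuclideanSpace.single i 1)| ≤
      C ^ 2 * (M |u (x + ε • EuclideanSpace.single i 1)| + M |u x| +
        ∫ s in (0:ℝ)..1, M (hessHS u (x + s • (ε • EuclideanSpace.single i 1)))) := by
  set v : EuclideanSpace ℝ (Fin n) := ε • EuclideanSpace.single i 1 with hv
  have habs : |ε| = 1 := by rcases hε with h | h <;> simp [h]
  have h1 : |fderiv ℝ u x (EuclideanSpace.single i 1)| = |fderiv ℝ u x v| := by
    rw [hv, ContinuousLinearMap.map_smul, smul_eq_mul, abs_mul, habs, one_mul]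
  have hHc : Continuous (fun s : ℝ => iteratedFDeriv ℝ 2 u (x + s • v) ![v, v]) := by
    exact ((ContinuousMultilinearMap.apply ℝ (fun _ : Fin 2 => EuclideanSpace ℝ (Fin n)) ℝ
      ![v, v]).continuous.comp
      (hu.continuous_iteratedFDeriv (WithTop.coe_le_coe.mpr le_top))).comp
      (continuous_const.add (continuous_id.smul continuous_const))
  have hhessc : Continuous (fun s : ℝ => hessHS u (x + s • v)) :=
    (hessHS_continuous u hu).comp (continuous_const.add (continuous_id.smul continuous_const))
  have h4 : (∫ s in (0:ℝ)..1, |iteratedFDeriv ℝ 2 u (x + s • v) ![v, v]|) ≤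
      ∫ s in (0:ℝ)..1, hessHS u (x + s • v) := by
    apply intervalIntegral.integral_mono_on zero_le_one
      (hHc.abs.intervalIntegrable 0 1) (hhessc.intervalIntegrable 0 1)
    intro s _
    exact abs_iteratedFDeriv_smul_le u i ε hε (x + s • v)
  have h2 : |fderiv ℝ u x v| ≤ |u (x + v)| + |u x| + ∫ s in (0:ℝ)..1, hessHS u (x + s • v) :=
    le_trans (deriv_line_bound u hu x v) (by linarith [h4])
  have hint_nn : (0:ℝ) ≤ ∫ s in (0:ℝ)..1, hessHS u (x + s • v) :=
    intervalIntegral.integral_nonneg zero_le_one fun s _ => hessHS_nonneg u _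
  have hMstep : M |fderiv ℝ u x v| ≤ M (|u (x + v)| + |u x| + ∫ s in (0:ℝ)..1, hessHS u (x + s • v)) :=
    hmono _ _ (abs_nonneg _) h2
  have hsplit : M (|u (x + v)| + |u x| + ∫ s in (0:ℝ)..1, hessHS u (x + s • v)) ≤
      C ^ 2 * (M |u (x + v)| + M |u x| + M (∫ s in (0:ℝ)..1, hessHS u (x + s • v))) := by
    have ha := abs_nonneg (u (x + v))
    have hb := abs_nonneg (u x)
    have s1 : M (|u (x + v)| + (|u x| + ∫ s in (0:ℝ)..1, hessHS u (x + s • v))) ≤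
        C * (M |u (x + v)| + M (|u x| + ∫ s in (0:ℝ)..1, hessHS u (x + s • v))) :=
      M_add hC hd hnn h0 hmono _ _ ha (by linarith)
    have s2 : M (|u x| + ∫ s in (0:ℝ)..1, hessHS u (x + s • v)) ≤
        C * (M |u x| + M (∫ s in (0:ℝ)..1, hessHS u (x + s • v))) :=
      M_add hC hd hnn h0 hmono _ _ hb hint_nn
    have hC0 : (0:ℝ) < C := lt_trans one_pos hC
    have hMa := hnn _ ha
    have hMb := hnn _ hb
    have hMc' := hnn _ hint_nn
    have harr : |u (x + v)| + |u x| + (∫ s in (0:ℝ)..1, hessHS u (x + s • v)) =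
        |u (x + v)| + (|u x| + ∫ s in (0:ℝ)..1, hessHS u (x + s • v)) := by ring
    rw [harr]
    have hCsq : C ≤ C ^ 2 := by nlinarith
    have e1 : C * M |u (x + v)| ≤ C ^ 2 * M |u (x + v)| :=
      mul_le_mul_of_nonneg_right hCsq hMa
    have e2 := mul_le_mul_of_nonneg_left s2 hC0.le
    calc M (|u (x + v)| + (|u x| + ∫ s in (0:ℝ)..1, hessHS u (x + s • v)))
        ≤ C * (M |u (x + v)| + M (|u x| + ∫ s in (0:ℝ)..1, hessHS u (x + s • v))) := s1
    _ = C * M |u (x + v)| + C * M (|u x| + ∫ s in (0:ℝ)..1, hessHS u (x + s • v)) := by ring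
    _ ≤ C ^ 2 * M |u (x + v)| +
        C * (C * (M |u x| + M (∫ s in (0:ℝ)..1, hessHS u (x + s • v)))) := by linarith
    _ = C ^ 2 * (M |u (x + v)| + M |u x| + M (∫ s in (0:ℝ)..1, hessHS u (x + s • v))) := by
        ring
  have hjensen : M (∫ s in (0:ℝ)..1, hessHS u (x + s • v)) ≤
      ∫ s in (0:ℝ)..1, M (hessHS u (x + s • v)) :=
    jensenM hconv hMc _ hhessc (fun s => hessHS_nonneg u _)
  have hC2 : (0:ℝ) < C ^ 2 := by positivity
  calc M |fderiv ℝ u x (EuclideanSpace.single i 1)| = M |fderiv ℝ u x v| := by rw [h1]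
  _ ≤ C ^ 2 * (M |u (x + v)| + M |u x| + M (∫ s in (0:ℝ)..1, hessHS u (x + s • v))) :=
      le_trans hMstep hsplit
  _ ≤ C ^ 2 * (M |u (x + v)| + M |u x| + ∫ s in (0:ℝ)..1, M (hessHS u (x + s • v))) := by
      nlinarith [hjensen]

end Pointwise


section Halfspace
variable {n : ℕ} {M : ℝ → ℝ} {C : ℝ}

lemma halfspace_bound (hconv : ConvexOn ℝ (Set.Ici 0) M) (h0 : M 0 = 0)
    (hMc : ContinuousOn M (Set.Ici 0))
    (hC : 1 < C) (hd : ∀ r : ℝ, 0 < r → M (2 * r) ≤ C * M r)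
    (hnn : ∀ r, 0 ≤ r → 0 ≤ M r)
    (hmono : ∀ a b, 0 ≤ a → a ≤ b → M a ≤ M b)
    (u : EuclideanSpace ℝ (Fin n) → ℝ) (hu : ContDiff ℝ (⊤ : ℕ∞) u)
    (i : Fin n) (ε : ℝ) (hε : ε = 1 ∨ ε = -1)
    (S : Set (EuclideanSpace ℝ (Fin n))) (hS : MeasurableSet S)
    (hSle : ∀ x ∈ S, ε * x i ≤ 0) :
    ∫⁻ x in S, ENNReal.ofReal (M |fderiv ℝ u x (EuclideanSpace.single i 1)|) ∂(gammaN n) ≤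
      ENNReal.ofReal (C ^ 2 * Real.exp (1/2)) *
        (∫⁻ x, ENNReal.ofReal (M (hessHS u x)) ∂(gammaN n)) +
      ENNReal.ofReal (C ^ 2 * (1 + Real.exp (1/2))) *
        (∫⁻ x, ENNReal.ofReal (M (|u x|)) ∂(gammaN n)) := by
  set v : EuclideanSpace ℝ (Fin n) := ε • EuclideanSpace.single i 1 with hv
  have habs : |ε| = 1 := by rcases hε with h | h <;> simp [h]
  have hv1 : ‖v‖ = 1 := by
    rw [hv, norm_smul, Real.norm_eq_abs, habs, one_mul, EuclideanSpace.norm_single]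
    simp
  have hMcont : ∀ (g : EuclideanSpace ℝ (Fin n) → ℝ), Continuous g → (∀ x, 0 ≤ g x) →
      Continuous fun x => M (g x) := fun g hg hgnn => hMc.comp_continuous hg hgnn
  have hucont := hu.continuous
  have hUc : Continuous fun x : EuclideanSpace ℝ (Fin n) => M |u x| :=
    hMcont _ hucont.abs fun x => abs_nonneg _
  have hUm : Measurable fun x : EuclideanSpace ℝ (Fin n) => ENNReal.ofReal (M |u x|) :=
    ENNReal.measurable_ofReal.comp hUc.measurable
  have hHc : Continuous fun x : EuclideanSpace ℝ (Fin n) => M (hessHS u x) :=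
    hMcont _ (hessHS_continuous u hu) fun x => hessHS_nonneg u x
  have hHm : Measurable fun x : EuclideanSpace ℝ (Fin n) => ENNReal.ofReal (M (hessHS u x)) :=
    ENNReal.measurable_ofReal.comp hHc.measurable
  have hDc : Continuous fun x : EuclideanSpace ℝ (Fin n) =>
      M |fderiv ℝ u x (EuclideanSpace.single i 1)| := by
    refine hMcont _ ?_ fun x => abs_nonneg _
    have hu1 : ContDiff ℝ (⊤ : ℕ∞) (fderiv ℝ u) := hu.fderiv_right (by simp)
    exact (hu1.continuous.clm_apply continuous_const).abs
  have hpairc : Continuous fun p : EuclideanSpace ℝ (Fin n) × ℝ =>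
      ENNReal.ofReal (M (hessHS u (p.1 + p.2 • v))) := by
    apply ENNReal.continuous_ofReal.comp
    exact hMc.comp_continuous ((hessHS_continuous u hu).comp
      (continuous_fst.add (continuous_snd.smul continuous_const)))
      (fun p => hessHS_nonneg u _)
  -- pointwise bound in ℝ≥0∞
  have hpt : ∀ x : EuclideanSpace ℝ (Fin n),
      ENNReal.ofReal (M |fderiv ℝ u x (EuclideanSpace.single i 1)|) ≤
        ENNReal.ofReal (C ^ 2) * (ENNReal.ofReal (M |u (x + v)|) + ENNReal.ofReal (M |u x|) +
          ∫⁻ s in Set.Ioc (0:ℝ) 1, ENNReal.ofReal (M (hessHS u (x + s • v)))) := by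
    intro x
    have hb := pointwise_bound hconv h0 hMc hC hd hnn hmono u hu i ε hε x
    have hA := hnn _ (abs_nonneg (u (x + v)))
    have hB := hnn _ (abs_nonneg (u x))
    have hJnn : (0:ℝ) ≤ ∫ s in (0:ℝ)..1, M (hessHS u (x + s • v)) :=
      intervalIntegral.integral_nonneg zero_le_one fun s _ => hnn _ (hessHS_nonneg u _)
    have hJeq : ENNReal.ofReal (∫ s in (0:ℝ)..1, M (hessHS u (x + s • v))) =
        ∫⁻ s in Set.Ioc (0:ℝ) 1, ENNReal.ofReal (M (hessHS u (x + s • v))) := by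
      rw [intervalIntegral.integral_of_le zero_le_one]
      apply ofReal_integral_eq_lintegral_ofReal
      · exact ((hMcont _ (hessHS_continuous u hu) fun y => hessHS_nonneg u y).comp
          (continuous_const.add (continuous_id.smul continuous_const))).integrableOn_Ioc
      · exact Filter.Eventually.of_forall fun s => hnn _ (hessHS_nonneg u _)
    calc ENNReal.ofReal (M |fderiv ℝ u x (EuclideanSpace.single i 1)|) ≤
        ENNReal.ofReal (C ^ 2 * (M |u (x + v)| + M |u x| +
          ∫ s in (0:ℝ)..1, M (hessHS u (x + s • v)))) := ENNReal.ofReal_le_ofReal hb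
    _ = ENNReal.ofReal (C ^ 2) * (ENNReal.ofReal (M |u (x + v)|) + ENNReal.ofReal (M |u x|) +
          ENNReal.ofReal (∫ s in (0:ℝ)..1, M (hessHS u (x + s • v)))) := by
        rw [ENNReal.ofReal_mul (by positivity), ENNReal.ofReal_add (by linarith) hJnn,
          ENNReal.ofReal_add hA hB]
    _ = _ := by rw [hJeq]
  -- integrate over S
  set IU := ∫⁻ x, ENNReal.ofReal (M (|u x|)) ∂(gammaN n) with hIU
  set IH := ∫⁻ x, ENNReal.ofReal (M (hessHS u x)) ∂(gammaN n) with hIH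
  have hT1 : ∫⁻ x in S, ENNReal.ofReal (M |u (x + v)|) ∂(gammaN n) ≤
      ENNReal.ofReal (Real.exp (1/2)) * IU := by
    apply shift_bound _ hUm v (le_of_eq hv1) S hS
    intro x hx
    have : ⟪x, v⟫ = ε * x i := by
      rw [hv, real_inner_smul_right]
      congr 1
      simp [EuclideanSpace.inner_single_right]
    rw [this]
    exact hSle x hx
  have hT2 : ∫⁻ x in S, ENNReal.ofReal (M |u x|) ∂(gammaN n) ≤ IU :=
    setLIntegral_le_lintegral S _
  have hT3 : ∫⁻ x in S, (∫⁻ s in Set.Ioc (0:ℝ) 1,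
      ENNReal.ofReal (M (hessHS u (x + s • v)))) ∂(gammaN n) ≤
      ENNReal.ofReal (Real.exp (1/2)) * IH := by
    have hsf : SigmaFinite (gammaN n) := by unfold gammaN; infer_instance
    rw [lintegral_lintegral_swap (hpairc.measurable.aemeasurable)]
    have hbd : ∀ s ∈ Set.Ioc (0:ℝ) 1,
        ∫⁻ x in S, ENNReal.ofReal (M (hessHS u (x + s • v))) ∂(gammaN n) ≤
          ENNReal.ofReal (Real.exp (1/2)) * IH := by
      intro s hs
      have := shift_bound (fun y => ENNReal.ofReal (M (hessHS u y))) hHm (s • v)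
        (by rw [norm_smul, hv1, mul_one, Real.norm_eq_abs, abs_of_pos hs.1]; exact hs.2)
        S hS ?_
      · simpa using this
      · intro x hx
        rw [real_inner_smul_right]
        have : ⟪x, v⟫ = ε * x i := by
          rw [hv, real_inner_smul_right]
          congr 1
          simp [EuclideanSpace.inner_single_right]
        rw [this]
        exact mul_nonpos_of_nonneg_of_nonpos hs.1.le (hSle x hx)
    calc ∫⁻ s in Set.Ioc (0:ℝ) 1, (∫⁻ x in S,
          ENNReal.ofReal (M (hessHS u (x + s • v))) ∂(gammaN n)) ≤
        ∫⁻ _ in Set.Ioc (0:ℝ) 1, (ENNReal.ofReal (Real.exp (1/2)) * IH) := by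
          apply lintegral_mono_ae
          filter_upwards [ae_restrict_mem measurableSet_Ioc] with s hs
          exact hbd s hs
    _ = ENNReal.ofReal (Real.exp (1/2)) * IH := by
        rw [setLIntegral_const]
        simp [Real.volume_Ioc]
  -- combine
  have hmeas_shift : Measurable fun x : EuclideanSpace ℝ (Fin n) =>
      ENNReal.ofReal (M |u (x + v)|) :=
    ENNReal.measurable_ofReal.comp ((hMcont _ (hucont.comp
      (continuous_id.add continuous_const)).abs fun x => abs_nonneg _).measurable)
  have hmeas_J : Measurable fun x : EuclideanSpace ℝ (Fin n) =>
      ∫⁻ s in Set.Ioc (0:ℝ) 1, ENNReal.ofReal (M (hessHS u (x + s • v))) :=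
    Measurable.lintegral_prod_right hpairc.measurable
  calc ∫⁻ x in S, ENNReal.ofReal (M |fderiv ℝ u x (EuclideanSpace.single i 1)|) ∂(gammaN n)
      ≤ ∫⁻ x in S, ENNReal.ofReal (C ^ 2) * (ENNReal.ofReal (M |u (x + v)|) +
          ENNReal.ofReal (M |u x|) +
          ∫⁻ s in Set.Ioc (0:ℝ) 1, ENNReal.ofReal (M (hessHS u (x + s • v)))) ∂(gammaN n) :=
        lintegral_mono fun x => hpt x
  _ = ENNReal.ofReal (C ^ 2) * (∫⁻ x in S, (ENNReal.ofReal (M |u (x + v)|) +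
        ENNReal.ofReal (M |u x|) +
        ∫⁻ s in Set.Ioc (0:ℝ) 1, ENNReal.ofReal (M (hessHS u (x + s • v)))) ∂(gammaN n)) := by
      rw [lintegral_const_mul _ (f := fun x => ENNReal.ofReal (M |u (x + v)|) + ENNReal.ofReal (M |u x|) + ∫⁻ s in Set.Ioc (0:ℝ) 1, ENNReal.ofReal (M (hessHS u (x + s • v)))) (((hmeas_shift.add hUm).add hmeas_J))]
  _ = ENNReal.ofReal (C ^ 2) * ((∫⁻ x in S, ENNReal.ofReal (M |u (x + v)|) ∂(gammaN n)) +
        (∫⁻ x in S, ENNReal.ofReal (M |u x|) ∂(gammaN n)) +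
        ∫⁻ x in S, (∫⁻ s in Set.Ioc (0:ℝ) 1,
          ENNReal.ofReal (M (hessHS u (x + s • v)))) ∂(gammaN n)) := by
      rw [lintegral_add_left (f := fun x => ENNReal.ofReal (M |u (x + v)|) + ENNReal.ofReal (M |u x|)) (hmeas_shift.add hUm), lintegral_add_left hmeas_shift]
  _ ≤ ENNReal.ofReal (C ^ 2) * ((ENNReal.ofReal (Real.exp (1/2)) * IU) + IU +
        ENNReal.ofReal (Real.exp (1/2)) * IH) := by
      gcongr
  _ = ENNReal.ofReal (C ^ 2 * Real.exp (1/2)) * IH +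
      ENNReal.ofReal (C ^ 2 * (1 + Real.exp (1/2))) * IU := by
      rw [ENNReal.ofReal_mul (by positivity), ENNReal.ofReal_mul (by positivity),
        ENNReal.ofReal_add (by norm_num) (Real.exp_pos _).le, ENNReal.ofReal_one]
      ring

end Halfspace

/-- Corollary 12, modular form (the Landau–Kolmogorov inequality for the Gaussian
measure): if `M` is a differentiable `N`-function satisfying the `Δ₂`-condition
and `M(r)/r²` is non-decreasing, then there are positive constants `C₁, C₂` such
that for all `u ∈ C₀^∞(ℝⁿ)`,
`∫ M(|∇u|) dγ_n ≤ C₁ ∫ M(|∇⁽²⁾u|) dγ_n + C₂ ∫ M(|u|) dγ_n`. -/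
theorem stmt_18 (n : ℕ) (hn : 1 ≤ n) (M : ℝ → ℝ)
    (hM : NFunction M) (hΔ : Delta2 M)
    (hdiff : DifferentiableOn ℝ M (Set.Ici 0))
    (hquad : MonotoneOn (fun r => M r / r ^ 2) (Set.Ioi 0)) :
    ∃ C₁ C₂ : ℝ, 0 < C₁ ∧ 0 < C₂ ∧
      ∀ u : EuclideanSpace ℝ (Fin n) → ℝ,
        ContDiff ℝ (⊤ : ℕ∞) u → HasCompactSupport u →
        (∫⁻ x, ENNReal.ofReal (M (‖gradient u x‖)) ∂ gammaN n) ≤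
          ENNReal.ofReal C₁ * (∫⁻ x, ENNReal.ofReal (M (hessHS u x)) ∂ gammaN n) +
          ENNReal.ofReal C₂ * (∫⁻ x, ENNReal.ofReal (M (|u x|)) ∂ gammaN n) := by
  obtain ⟨C, hC, hd⟩ := hΔ
  have hconv := hM.1
  have h0 := hM.2.1
  have hlim := hM.2.2.1
  have hnn : ∀ r, 0 ≤ r → 0 ≤ M r := M_nonneg hconv h0 hlim
  have hmono : ∀ a b, 0 ≤ a → a ≤ b → M a ≤ M b := M_mono hconv h0 hlim
  have hMc : ContinuousOn M (Set.Ici 0) := hdiff.continuousOn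
  have hC0 : (0:ℝ) < C := lt_trans one_pos hC
  set A : ℝ := C ^ 2 * Real.exp (1/2) with hA
  set B : ℝ := C ^ 2 * (1 + Real.exp (1/2)) with hB
  have hApos : 0 < A := by positivity
  have hBpos : 0 < B := by positivity
  have hnpos : (0:ℝ) < (n:ℝ) := by exact_mod_cast hn
  refine ⟨C ^ n * ((n:ℝ) * (2 * A)), C ^ n * ((n:ℝ) * (2 * B)), by positivity, by positivity, ?_⟩
  intro u hu _
  set IU := ∫⁻ x, ENNReal.ofReal (M (|u x|)) ∂(gammaN n) with hIU
  set IH := ∫⁻ x, ENNReal.ofReal (M (hessHS u x)) ∂(gammaN n) with hIH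
  have hu1 : ContDiff ℝ (⊤ : ℕ∞) (fderiv ℝ u) := hu.fderiv_right (by simp)
  have hDc : ∀ i : Fin n, Continuous fun x : EuclideanSpace ℝ (Fin n) =>
      M |fderiv ℝ u x (EuclideanSpace.single i 1)| := fun i =>
    hMc.comp_continuous (hu1.continuous.clm_apply continuous_const).abs
      fun x => Set.mem_Ici.2 (abs_nonneg _)
  have hDm : ∀ i : Fin n, Measurable fun x : EuclideanSpace ℝ (Fin n) =>
      ENNReal.ofReal (M |fderiv ℝ u x (EuclideanSpace.single i 1)|) := fun i =>
    ENNReal.measurable_ofReal.comp (hDc i).measurable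
  -- per coordinate bound
  have hcoord : ∀ i : Fin n,
      ∫⁻ x, ENNReal.ofReal (M |fderiv ℝ u x (EuclideanSpace.single i 1)|) ∂(gammaN n) ≤
        2 * (ENNReal.ofReal A * IH + ENNReal.ofReal B * IU) := by
    intro i
    have hproj : Continuous fun x : EuclideanSpace ℝ (Fin n) => x i :=
      (EuclideanSpace.proj (𝕜 := ℝ) i).continuous
    set S : Set (EuclideanSpace ℝ (Fin n)) := {x | 0 ≤ x i} with hSdef
    have hS : MeasurableSet S := measurableSet_le measurable_const hproj.measurable
    have hhalf1 := halfspace_bound hconv h0 hMc hC hd hnn hmono u hu i (-1) (Or.inr rfl)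
      S hS (fun x hx => by
        have : (0:ℝ) ≤ x i := hx
        nlinarith)
    have hhalf2 := halfspace_bound hconv h0 hMc hC hd hnn hmono u hu i 1 (Or.inl rfl)
      Sᶜ hS.compl (fun x hx => by
        have : ¬ (0:ℝ) ≤ x i := hx
        nlinarith [lt_of_not_ge this])
    rw [← lintegral_add_compl
      (fun x => ENNReal.ofReal (M |fderiv ℝ u x (EuclideanSpace.single i 1)|)) hS]
    rw [← hIH, ← hIU] at hhalf1 hhalf2
    calc (∫⁻ x in S, ENNReal.ofReal (M |fderiv ℝ u x (EuclideanSpace.single i 1)|) ∂(gammaN n))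
          + ∫⁻ x in Sᶜ, ENNReal.ofReal (M |fderiv ℝ u x (EuclideanSpace.single i 1)|) ∂(gammaN n)
        ≤ (ENNReal.ofReal A * IH + ENNReal.ofReal B * IU) +
          (ENNReal.ofReal A * IH + ENNReal.ofReal B * IU) := add_le_add hhalf1 hhalf2
    _ = 2 * (ENNReal.ofReal A * IH + ENNReal.ofReal B * IU) := by ring
  -- gradient pointwise bound
  have hgrad : ∀ x, ENNReal.ofReal (M (‖gradient u x‖)) ≤
      ENNReal.ofReal (C ^ n) *
        ∑ i : Fin n, ENNReal.ofReal (M |fderiv ℝ u x (EuclideanSpace.single i 1)|) := by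
    intro x
    have h1 : M (‖gradient u x‖) ≤
        M (∑ i : Fin n, |fderiv ℝ u x (EuclideanSpace.single i 1)|) :=
      hmono _ _ (norm_nonneg _) (grad_le_sum_partials u x)
    have h2 := M_sum hC hd hnn h0 hmono (Finset.univ : Finset (Fin n))
      (fun i => |fderiv ℝ u x (EuclideanSpace.single i 1)|) (fun i => abs_nonneg _)
    rw [Finset.card_univ, Fintype.card_fin] at h2
    calc ENNReal.ofReal (M (‖gradient u x‖)) ≤
        ENNReal.ofReal (C ^ n * ∑ i : Fin n, M |fderiv ℝ u x (EuclideanSpace.single i 1)|) :=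
          ENNReal.ofReal_le_ofReal (le_trans h1 h2)
    _ = ENNReal.ofReal (C ^ n) *
        ∑ i : Fin n, ENNReal.ofReal (M |fderiv ℝ u x (EuclideanSpace.single i 1)|) := by
        rw [ENNReal.ofReal_mul (by positivity),
          ENNReal.ofReal_sum_of_nonneg (fun i _ => hnn _ (abs_nonneg _))]
  calc ∫⁻ x, ENNReal.ofReal (M (‖gradient u x‖)) ∂(gammaN n)
      ≤ ∫⁻ x, ENNReal.ofReal (C ^ n) *
          ∑ i : Fin n, ENNReal.ofReal (M |fderiv ℝ u x (EuclideanSpace.single i 1)|)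
          ∂(gammaN n) := lintegral_mono hgrad
  _ = ENNReal.ofReal (C ^ n) * ∑ i : Fin n,
        ∫⁻ x, ENNReal.ofReal (M |fderiv ℝ u x (EuclideanSpace.single i 1)|) ∂(gammaN n) := by
      rw [lintegral_const_mul _ (Finset.measurable_sum _ fun i _ => hDm i),
        lintegral_finset_sum _ fun i _ => hDm i]
  _ ≤ ENNReal.ofReal (C ^ n) * ∑ _i : Fin n,
        (2 * (ENNReal.ofReal A * IH + ENNReal.ofReal B * IU)) := by
      gcongr with i _
      exact hcoord i
  _ = ENNReal.ofReal (C ^ n) * ((n:ℝ≥0∞) *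
        (2 * (ENNReal.ofReal A * IH + ENNReal.ofReal B * IU))) := by
      rw [Finset.sum_const, Finset.card_univ, Fintype.card_fin, nsmul_eq_mul]
  _ = ENNReal.ofReal (C ^ n * ((n:ℝ) * (2 * A))) * IH +
      ENNReal.ofReal (C ^ n * ((n:ℝ) * (2 * B))) * IU := by
      have e1 : ENNReal.ofReal (C ^ n * ((n:ℝ) * (2 * A))) =
          ENNReal.ofReal (C ^ n) * ((n:ℝ≥0∞) * (2 * ENNReal.ofReal A)) := by
        rw [ENNReal.ofReal_mul (by positivity), ENNReal.ofReal_mul (by positivity),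
          ENNReal.ofReal_mul (by positivity), ENNReal.ofReal_natCast, ENNReal.ofReal_ofNat]
      have e2 : ENNReal.ofReal (C ^ n * ((n:ℝ) * (2 * B))) =
          ENNReal.ofReal (C ^ n) * ((n:ℝ≥0∞) * (2 * ENNReal.ofReal B)) := by
        rw [ENNReal.ofReal_mul (by positivity), ENNReal.ofReal_mul (by positivity),
          ENNReal.ofReal_mul (by positivity), ENNReal.ofReal_natCast, ENNReal.ofReal_ofNat]
      rw [e1, e2]
      ring
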